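/- Let D be the derivation on ℚ[t,x,y] determined by D(t) = t²(x+y), D(x) = 2txy, D(y) = 2txy. Then for every n ≥ 0, D^n(t) = n!·t^{n+1}·N^B_n(x,y), where N^B_n(x,y) = Σ_{k=0}^{n} C(n,k)²·x^k·y^{n-k}. -/
import Mathlib

open MvPolynomial

/-- The homogeneous Narayana polynomial of type B inside `ℚ[t,x,y]`, where
`X 0 = t`, `X 1 = x`, `X 2 = y`. -/
noncomputable def narayanaB3 (n : ℕ) : MvPolynomial (Fin 3) ℚ :=
  ∑ k ∈ Finset.range (n + 1),
    MvPolynomial.C ((n.choose k : ℚ) ^ 2) * X 1 ^ k * X 2 ^ (n - k)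

private abbrev P3 := MvPolynomial (Fin 3) ℚ

private lemma scalar_key (n k : ℕ) (hk : k ≤ n) :
    ((n:ℚ)+1+2*((n-k:ℕ):ℚ)) * (n.choose k:ℚ)^2 + ((n:ℚ)+1+2*((k:ℚ)+1)) * (n.choose (k+1):ℚ)^2
      = ((n:ℚ)+1) * ((n+1).choose (k+1):ℚ)^2 := by
  have h2 : ((n-k:ℕ):ℚ) = (n:ℚ)-k := by rw [Nat.cast_sub hk]
  have h1 : (n.choose (k+1):ℚ) * ((k:ℚ)+1) = (n.choose k:ℚ) * ((n:ℚ)-k) := by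
    have h := Nat.choose_succ_right_eq n k
    have h' : ((n.choose (k+1) * (k+1) : ℕ) : ℚ) = ((n.choose k * (n-k) : ℕ) : ℚ) := by rw [h]
    push_cast [Nat.cast_sub hk] at h'
    linarith [h']
  have hp : (((n+1).choose (k+1):ℕ):ℚ) = (n.choose k:ℚ) + (n.choose (k+1):ℚ) := by
    rw [Nat.choose_succ_succ]; push_cast; ring
  rw [h2, hp]
  linear_combination (2*(n.choose (k+1):ℚ) - 2*(n.choose k:ℚ)) * h1

private lemma key_identity (n : ℕ) :
    C ((n:ℚ)+1) * (X 1 + X 2) * narayanaB3 n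
      + 2 * ∑ k ∈ Finset.range (n+1), C ((n.choose k:ℚ)^2) *
          (C (k:ℚ) * X 1 ^ k * X 2 ^ (n-k+1) + C ((n-k:ℕ):ℚ) * X 1 ^ (k+1) * X 2 ^ (n-k))
      = C ((n:ℚ)+1) * narayanaB3 (n+1) := by
  set A : ℕ → MvPolynomial (Fin 3) ℚ := fun k =>
    C (((n:ℚ)+1+2*((n-k:ℕ):ℚ)) * (n.choose k:ℚ)^2) * X 1^(k+1) * X 2^(n-k) with hA
  set B : ℕ → MvPolynomial (Fin 3) ℚ := fun k =>
    C (((n:ℚ)+1+2*(k:ℚ)) * (n.choose k:ℚ)^2) * X 1^k * X 2^(n-k+1) with hB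
  have claim1 : C ((n:ℚ)+1) * (X 1 + X 2) * narayanaB3 n
      + 2 * ∑ k ∈ Finset.range (n+1), C ((n.choose k:ℚ)^2) *
          (C (k:ℚ) * X 1 ^ k * X 2 ^ (n-k+1) + C ((n-k:ℕ):ℚ) * X 1 ^ (k+1) * X 2 ^ (n-k))
      = (∑ k ∈ Finset.range (n+1), A k) + ∑ k ∈ Finset.range (n+1), B k := by
    unfold narayanaB3
    rw [Finset.mul_sum, Finset.mul_sum, ← Finset.sum_add_distrib, ← Finset.sum_add_distrib]
    refine Finset.sum_congr rfl fun k hk => ?_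
    simp only [hA, hB, map_mul, map_add, map_pow, map_ofNat]
    ring
  rw [claim1]
  have hR : C ((n:ℚ)+1) * narayanaB3 (n+1)
      = (∑ k ∈ Finset.range (n+1), C (((n:ℚ)+1) * ((n+1).choose (k+1):ℚ)^2) * X 1^(k+1) * X 2^(n-k))
        + C ((n:ℚ)+1) * X 2^(n+1) := by
    unfold narayanaB3
    rw [Finset.mul_sum, Finset.sum_range_succ']
    congr 1
    · refine Finset.sum_congr rfl fun k hk => ?_
      have : n + 1 - (k + 1) = n - k := by omega
      rw [this, map_mul]
      ring
    · simp
  rw [hR]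
  rw [Finset.sum_range_succ' B]
  have hB0 : B 0 = C ((n:ℚ)+1) * X 2^(n+1) := by
    simp only [hB]
    norm_num
  rw [hB0]
  rw [Finset.sum_range_succ A, Finset.sum_range_succ
    (fun k => C (((n:ℚ)+1) * ((n+1).choose (k+1):ℚ)^2) * X 1^(k+1) * X 2^(n-k))]
  have hAn : A n = C (((n:ℚ)+1) * ((n+1).choose (n+1):ℚ)^2) * X 1^(n+1) * X 2^(n-n) := by
    simp only [hA]
    norm_num
  have hmain : ∀ k ∈ Finset.range n, A k + B (k+1)
      = C (((n:ℚ)+1) * ((n+1).choose (k+1):ℚ)^2) * X 1^(k+1) * X 2^(n-k) := by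
    intro k hk
    rw [Finset.mem_range] at hk
    simp only [hA, hB]
    have he : n - (k+1) + 1 = n - k := by omega
    rw [he, ← scalar_key n k (le_of_lt hk), map_add]
    push_cast
    ring
  calc (∑ k ∈ Finset.range n, A k) + A n
        + ((∑ k ∈ Finset.range n, B (k+1)) + C ((n:ℚ)+1) * X 2^(n+1))
      = ((∑ k ∈ Finset.range n, (A k + B (k+1))) + A n) + C ((n:ℚ)+1) * X 2^(n+1) := by
        rw [Finset.sum_add_distrib]; ring
    _ = _ := by
        rw [Finset.sum_congr rfl hmain, hAn]

private lemma Dpow (D : Derivation ℚ P3 P3) (p : P3) (m : ℕ) :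
    D (p ^ m) = C (m:ℚ) * p^(m-1) * D p := by
  rw [Derivation.leibniz_pow]
  simp only [smul_eq_mul, nsmul_eq_mul, map_natCast]
  ring

private lemma merge (p : P3) (m : ℕ) : C (m:ℚ) * p^(m-1) * p = C (m:ℚ) * p^m := by
  cases m with
  | zero => simp
  | succ m => rw [mul_assoc, ← pow_succ]; norm_num

private lemma DN (D : Derivation ℚ P3 P3)
    (hx : D (X 1) = 2 * X 0 * X 1 * X 2)
    (hy : D (X 2) = 2 * X 0 * X 1 * X 2) (n : ℕ) :
    D (narayanaB3 n) = (2 * X 0) * ∑ k ∈ Finset.range (n+1),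
      C ((n.choose k:ℚ)^2) * (C (k:ℚ) * X 1 ^ k * X 2 ^ (n-k+1)
        + C ((n-k:ℕ):ℚ) * X 1 ^ (k+1) * X 2 ^ (n-k)) := by
  unfold narayanaB3
  rw [map_sum, Finset.mul_sum]
  refine Finset.sum_congr rfl fun k hk => ?_
  have hsm : C ((n.choose k:ℚ)^2) * X 1 ^ k * X 2 ^ (n-k)
      = ((n.choose k:ℚ)^2) • ((X 1:P3) ^ k * X 2 ^ (n-k)) := by
    rw [smul_eq_C_mul, mul_assoc]
  rw [hsm, Derivation.map_smul, Derivation.leibniz, Dpow, Dpow, hx, hy, smul_eq_C_mul]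
  have e1 := merge (X 1 : P3) k
  have e2 := merge (X 2 : P3) (n - k)
  simp only [smul_eq_mul]
  linear_combination (C ((n.choose k:ℚ)^2) * 2 * X 0 * X 2^(n-k) * X 2) * e1
    + (C ((n.choose k:ℚ)^2) * 2 * X 0 * X 1^(k+1)) * e2

theorem derivation_iterate_t (D : Derivation ℚ (MvPolynomial (Fin 3) ℚ) (MvPolynomial (Fin 3) ℚ))
    (ht : D (X 0) = X 0 ^ 2 * (X 1 + X 2))
    (hx : D (X 1) = 2 * X 0 * X 1 * X 2)
    (hy : D (X 2) = 2 * X 0 * X 1 * X 2) (n : ℕ) :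
    (⇑D)^[n] (X 0) = MvPolynomial.C ((n.factorial : ℚ)) * X 0 ^ (n + 1) * narayanaB3 n := by
  induction n with
  | zero => simp [narayanaB3]
  | succ n ih =>
    rw [Function.iterate_succ_apply', ih]
    have hsm : C ((n.factorial:ℚ)) * X 0 ^ (n+1) * narayanaB3 n
        = ((n.factorial:ℚ)) • ((X 0:P3) ^ (n+1) * narayanaB3 n) := by
      rw [smul_eq_C_mul, mul_assoc]
    rw [hsm, Derivation.map_smul, Derivation.leibniz, Dpow, ht, DN D hx hy, smul_eq_C_mul]
    have K := key_identity n
    have hf : ((n+1).factorial : ℚ) = ((n:ℚ)+1) * (n.factorial:ℚ) := by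
      rw [Nat.factorial_succ]; push_cast; ring
    rw [hf, map_mul]
    simp only [smul_eq_mul, Nat.add_sub_cancel]
    have hc : (C ((n:ℚ)+1) : P3) = C (((n+1:ℕ):ℚ)) := by push_cast; ring
    rw [← hc]
    linear_combination (C ((n.factorial:ℚ)) * X 0^(n+2)) * K
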